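/- There exists a continuous function f : I² → ℝ such that for every p ∈ ℝ, no path-connected subset S ⊆ f^{-1}({p}) connects two opposite faces of the unit square I² (i.e., no path-connected level-set subset is connected, meets both {x₁=0} and {x₁=1}, or both {x₂=0} and {x₂=1}). -/
import Mathlib

open Real

/-- Oscillating function: for `t > 0`, `sc t` oscillates between `(1-t)/2` and `1 - t/2`. -/
noncomputable def sc (t : ℝ) : ℝ := (1 - t)/2 + (1 - Real.cos (1/t - 1))/4

/-- The function on the square. -/
noncomputable def fc (v : Fin 2 → ℝ) : ℝ :=
  v 0 * (v 1 - sc (v 0)) + (1 - v 0) * min (v 1 - (1 - v 0)/2) 0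

lemma sc_lb (t : ℝ) : (1 - t)/2 ≤ sc t := by
  have h := Real.cos_le_one (1/t - 1)
  unfold sc; nlinarith

lemma sc_ub (t : ℝ) : sc t ≤ 1 - t/2 := by
  have h := Real.neg_one_le_cos (1/t - 1)
  unfold sc; nlinarith

lemma cont_c : Continuous (fun t : ℝ => t * Real.cos (1/t - 1)) := by
  rw [continuous_iff_continuousAt]
  intro t
  rcases eq_or_ne t 0 with h | h
  · subst h
    have h0 : (0:ℝ) * Real.cos (1/(0:ℝ) - 1) = 0 := by simp
    rw [ContinuousAt, h0]
    refine squeeze_zero_norm (fun x => ?_) (by simpa using (continuous_abs.tendsto (0:ℝ)))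
    rw [Real.norm_eq_abs, abs_mul]
    nlinarith [abs_nonneg x, Real.abs_cos_le_one (1/x - 1), abs_nonneg (Real.cos (1/x - 1))]
  · exact continuousAt_id.mul (Real.continuous_cos.continuousAt.comp
      ((continuousAt_const.div continuousAt_id h).sub continuousAt_const))

lemma cont_fc : Continuous fc := by
  have hc := cont_c
  have h0 : Continuous (fun v : Fin 2 → ℝ => v 0) := continuous_apply 0
  have h1 : Continuous (fun v : Fin 2 → ℝ => v 1) := continuous_apply 1
  have key : fc = fun v => v 0 * v 1 - (v 0 * (1 - v 0)/2
      + (v 0 - v 0 * Real.cos (1/(v 0) - 1))/4)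
      + (1 - v 0) * min (v 1 - (1 - v 0)/2) 0 := by
    funext v; unfold fc sc; ring
  rw [key]
  exact (((h0.mul h1).sub (((h0.mul (continuous_const.sub h0)).div_const 2).add
      ((h0.sub (hc.comp h0)).div_const 4))).add
    ((continuous_const.sub h0).mul ((h1.sub ((continuous_const.sub h0).div_const 2)).min
      continuous_const)))

lemma mem_sq {v : Fin 2 → ℝ} (hv : v ∈ Set.Icc (0 : Fin 2 → ℝ) 1) :
    0 ≤ v 0 ∧ v 0 ≤ 1 ∧ 0 ≤ v 1 ∧ v 1 ≤ 1 := by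
  obtain ⟨h0, h1⟩ := hv
  exact ⟨by simpa using h0 0, by simpa using h1 0, by simpa using h0 1, by simpa using h1 1⟩

lemma fc_pos {v : Fin 2 → ℝ} (hv : v ∈ Set.Icc (0 : Fin 2 → ℝ) 1) (h : 0 < fc v) :
    0 < v 0 ∧ 0 < v 1 := by
  obtain ⟨h00, h01, h10, h11⟩ := mem_sq hv
  constructor
  · rcases h00.eq_or_lt with e | e
    · exfalso
      have hv0 : v 0 = 0 := e.symm
      have : fc v ≤ 0 := by
        unfold fc; rw [hv0]
        simp only [zero_mul, sub_zero, one_mul, zero_add]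
        exact min_le_right _ _
      linarith
    · exact e
  · rcases h10.eq_or_lt with e | e
    · exfalso
      have hv1 : v 1 = 0 := e.symm
      have hm : min (v 1 - (1 - v 0)/2) 0 ≤ 0 := min_le_right _ _
      have hsc : (1 - v 0)/2 ≤ sc (v 0) := sc_lb _
      have : fc v ≤ 0 := by
        unfold fc; rw [hv1]
        nlinarith [mul_nonneg h00 (le_trans (by linarith : (0:ℝ) ≤ (1 - v 0)/2) hsc),
          mul_nonpos_of_nonneg_of_nonpos (by linarith : (0:ℝ) ≤ 1 - v 0)
            (min_le_right (0 - (1 - v 0)/2) 0)]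
      linarith
    · exact e

lemma fc_neg {v : Fin 2 → ℝ} (hv : v ∈ Set.Icc (0 : Fin 2 → ℝ) 1) (h : fc v < 0) :
    v 0 < 1 ∧ v 1 < 1 := by
  obtain ⟨h00, h01, h10, h11⟩ := mem_sq hv
  constructor
  · rcases h01.lt_or_eq with e | e
    · exact e
    · exfalso
      have hsc1 : sc 1 = 0 := by unfold sc; norm_num
      have : fc v = v 1 := by unfold fc; rw [e, hsc1]; ring
      linarith
  · rcases h11.lt_or_eq with e | e
    · exact e
    · exfalso
      have hmin : min (v 1 - (1 - v 0)/2) 0 = 0 := by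
        rw [min_eq_right]; rw [e]; linarith
      have hsc : sc (v 0) ≤ 1 - (v 0)/2 := sc_ub _
      have : fc v = v 0 * (1 - sc (v 0)) := by unfold fc; rw [hmin, e]; ring
      nlinarith [mul_nonneg h00 (by linarith : (0:ℝ) ≤ 1 - sc (v 0))]

lemma fc_zero {v : Fin 2 → ℝ} (hv : v ∈ Set.Icc (0 : Fin 2 → ℝ) 1) (h : fc v = 0) :
    (v 0 = 0 ∧ 1/2 ≤ v 1) ∨ (0 < v 0 ∧ v 1 = sc (v 0)) := by
  obtain ⟨h00, h01, h10, h11⟩ := mem_sq hv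
  rcases h00.eq_or_lt with e | e
  · left
    have hv0 : v 0 = 0 := e.symm
    refine ⟨hv0, ?_⟩
    unfold fc at h
    rw [hv0] at h
    norm_num at h
    rcases le_or_gt (1/2 : ℝ) (v 1) with hge | hlt
    · exact hge
    · linarith
  · right
    refine ⟨e, ?_⟩
    have hsc : (1 - v 0)/2 ≤ sc (v 0) := sc_lb _
    rcases lt_trichotomy (v 1) (sc (v 0)) with hlt | heq | hgt
    · exfalso
      have h1 : v 0 * (v 1 - sc (v 0)) < 0 := mul_neg_of_pos_of_neg e (by linarith)
      have h2 : (1 - v 0) * min (v 1 - (1 - v 0)/2) 0 ≤ 0 :=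
        mul_nonpos_of_nonneg_of_nonpos (by linarith) (min_le_right _ _)
      have : fc v < 0 := by unfold fc; linarith
      linarith
    · exact heq
    · exfalso
      have hmin : min (v 1 - (1 - v 0)/2) 0 = 0 := by
        rw [min_eq_right]; linarith
      have h1 : 0 < v 0 * (v 1 - sc (v 0)) := mul_pos e (by linarith)
      have : 0 < fc v := by unfold fc; rw [hmin]; linarith
      linarith

set_option maxHeartbeats 1000000 in
lemma no_path {S : Set (Fin 2 → ℝ)} (hsub : S ⊆ Set.Icc (0 : Fin 2 → ℝ) 1)
    (hval : ∀ x ∈ S, fc x = 0) (hpc : IsPathConnected S)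
    {u w : Fin 2 → ℝ} (hu : u ∈ S) (hw : w ∈ S) (hu0 : u 0 = 0) (hw0 : 0 < w 0) : False := by
  obtain ⟨γ, hγ⟩ := hpc.joinedIn u hu w hw
  have hmem : ∀ r : ℝ, γ.extend r ∈ S := fun r => by
    have hr : γ.extend r ∈ Set.range γ := by
      rw [← Path.extend_range]; exact ⟨r, rfl⟩
    obtain ⟨t, ht⟩ := hr
    rw [← ht]; exact hγ t
  set X : ℝ → ℝ := fun r => γ.extend r 0 with hXdef
  set Y : ℝ → ℝ := fun r => γ.extend r 1 with hYdef
  have hX : Continuous X := (continuous_apply 0).comp γ.continuous_extend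
  have hY : Continuous Y := (continuous_apply 1).comp γ.continuous_extend
  have hfact : ∀ r, (X r = 0 ∧ 1/2 ≤ Y r) ∨ (0 < X r ∧ Y r = sc (X r)) :=
    fun r => fc_zero (hsub (hmem r)) (hval _ (hmem r))
  have hX0 : X 0 = 0 := by simp [hXdef, Path.extend_zero, hu0]
  have hX1 : X 1 = w 0 := by simp [hXdef, Path.extend_one]
  set A : Set ℝ := Set.Icc (0:ℝ) 1 ∩ X ⁻¹' {0} with hA
  have hAne : A.Nonempty := ⟨0, ⟨le_rfl, zero_le_one⟩, by simpa using hX0⟩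
  have hAbdd : BddAbove A := ⟨1, fun r hr => hr.1.2⟩
  have hAcl : IsClosed A := isClosed_Icc.inter (isClosed_singleton.preimage hX)
  set t := sSup A with ht
  have htA : t ∈ A := hAcl.csSup_mem hAne hAbdd
  have ht0 : 0 ≤ t := htA.1.1
  have hXt : X t = 0 := htA.2
  have ht1 : t < 1 := by
    rcases htA.1.2.lt_or_eq with hl | hl
    · exact hl
    · exfalso; rw [hl] at hXt; rw [hX1] at hXt; linarith
  obtain ⟨δ, hδpos, hδ⟩ := Metric.continuousAt_iff.mp hY.continuousAt (1/8) (by norm_num)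
  set r₁ := min (t + δ/2) 1 with hr₁
  have htr₁ : t < r₁ := lt_min (by linarith) ht1
  have hr₁1 : r₁ ≤ 1 := min_le_right _ _
  have hr₁t : r₁ - t ≤ δ/2 := by
    have : r₁ ≤ t + δ/2 := min_le_left _ _
    linarith
  have hXr₁pos : 0 < X r₁ := by
    rcases hfact r₁ with ⟨h0, _⟩ | ⟨hp, _⟩
    · exfalso
      have : r₁ ∈ A := ⟨⟨by linarith, hr₁1⟩, by simpa using h0⟩
      have := le_csSup hAbdd this
      rw [← ht] at this
      linarith
    · exact hp
  set ξ := X r₁ with hξ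
  have hmpos : 0 < min ξ (1/8 : ℝ) := lt_min hXr₁pos (by norm_num)
  obtain ⟨k, hk⟩ := exists_nat_ge (1 / min ξ (1/8 : ℝ))
  have hπ := Real.pi_gt_three
  have hπpos : 0 < π := by linarith
  have hkistight : (1:ℝ) / min ξ (1/8) ≤ (k:ℝ) := hk
  have hkpos : (0:ℝ) < (k:ℝ) := by
    have h8 : (8:ℝ) ≤ 1 / min ξ (1/8) := by
      rw [le_div_iff₀ hmpos]
      nlinarith [min_le_right ξ (1/8 : ℝ)]
    linarith
  -- the two sample points
  set x₁ : ℝ := 1/(1 + (2*(k:ℝ)+1)*π) with hx₁def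
  set x₂ : ℝ := 1/(1 + (2*(k:ℝ))*π) with hx₂def
  have hd₁pos : 0 < 1 + (2*(k:ℝ)+1)*π := by nlinarith
  have hd₂pos : 0 < 1 + (2*(k:ℝ))*π := by nlinarith
  have hx₁pos : 0 < x₁ := by rw [hx₁def]; positivity
  have hx₂pos : 0 < x₂ := by rw [hx₂def]; positivity
  have hx₁le : x₁ ≤ min ξ (1/8 : ℝ) := by
    rw [hx₁def]
    rw [div_le_iff₀ hd₁pos]
    rw [div_le_iff₀ hmpos] at hkistight
    nlinarith [min_le_right ξ (1/8:ℝ)]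
  have hx₂le : x₂ ≤ min ξ (1/8 : ℝ) := by
    rw [hx₂def]
    rw [div_le_iff₀ hd₂pos]
    rw [div_le_iff₀ hmpos] at hkistight
    nlinarith [min_le_right ξ (1/8:ℝ)]
  have hcos₁ : Real.cos (1/x₁ - 1) = -1 := by
    rw [hx₁def, one_div_one_div]
    have : 1 + (2*(k:ℝ)+1)*π - 1 = (k:ℝ)*(2*π) + π := by ring
    rw [this, Real.cos_add]
    have hc : Real.cos ((k:ℝ)*(2*π)) = 1 := Real.cos_nat_mul_two_pi k
    have hs : Real.sin ((k:ℝ)*(2*π)) = 0 := by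
      have := Real.sin_nat_mul_pi (2*k)
      push_cast at this
      rw [← this]; ring_nf
    rw [hc, hs, Real.cos_pi, Real.sin_pi]; ring
  have hcos₂ : Real.cos (1/x₂ - 1) = 1 := by
    rw [hx₂def, one_div_one_div]
    have : 1 + (2*(k:ℝ))*π - 1 = (k:ℝ)*(2*π) := by ring
    rw [this]
    exact Real.cos_nat_mul_two_pi k
  -- IVT
  have hIVT := intermediate_value_Icc (le_of_lt htr₁) (hX.continuousOn (s := Set.Icc t r₁))
  have hmem₁ : x₁ ∈ Set.Icc (X t) (X r₁) := by
    rw [hXt]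
    exact ⟨le_of_lt hx₁pos, le_trans hx₁le (min_le_left _ _)⟩
  have hmem₂ : x₂ ∈ Set.Icc (X t) (X r₁) := by
    rw [hXt]
    exact ⟨le_of_lt hx₂pos, le_trans hx₂le (min_le_left _ _)⟩
  obtain ⟨r', hr'mem, hr'⟩ := hIVT hmem₁
  obtain ⟨r'', hr''mem, hr''⟩ := hIVT hmem₂
  -- distances
  have hdist : ∀ r ∈ Set.Icc t r₁, dist (Y r) (Y t) < 1/8 := by
    intro r hr
    apply hδ
    rw [Real.dist_eq, abs_lt]
    exact ⟨by linarith [hr.1], by linarith [hr.2, hr₁t, hδpos]⟩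
  have hYr' : Y r' = sc x₁ := by
    rcases hfact r' with ⟨h0, _⟩ | ⟨_, hs⟩
    · exfalso; rw [hr'] at h0; linarith
    · rw [hs, hr']
  have hYr'' : Y r'' = sc x₂ := by
    rcases hfact r'' with ⟨h0, _⟩ | ⟨_, hs⟩
    · exfalso; rw [hr''] at h0; linarith
    · rw [hs, hr'']
  have hscx₁ : sc x₁ = (1 - x₁)/2 + 1/2 := by unfold sc; rw [hcos₁]; ring
  have hscx₂ : sc x₂ = (1 - x₂)/2 := by unfold sc; rw [hcos₂]; ring
  have hx₁small : x₁ ≤ 1/8 := le_trans hx₁le (min_le_right _ _)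
  have hY1 : (15:ℝ)/16 ≤ Y r' := by rw [hYr', hscx₁]; linarith
  have hY2 : Y r'' ≤ 1/2 := by rw [hYr'', hscx₂]; linarith [hx₂pos]
  have hd1 := hdist r' hr'mem
  have hd2 := hdist r'' hr''mem
  rw [Real.dist_eq, abs_lt] at hd1 hd2
  linarith [hd1.1, hd1.2, hd2.1, hd2.2]

/-- There is a continuous function `f : I² → ℝ` none of whose level sets contains a
path-connected subset connecting two opposite faces of the unit square. -/
theorem no_path_connected_level_subset_connecting_faces :
    ∃ f : (Fin 2 → ℝ) → ℝ, ContinuousOn f (Set.Icc (0 : Fin 2 → ℝ) 1) ∧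
      ∀ p : ℝ, ∀ S : Set (Fin 2 → ℝ), S ⊆ Set.Icc (0 : Fin 2 → ℝ) 1 →
        (∀ x ∈ S, f x = p) → IsPathConnected S →
        ∀ d : Fin 2, ¬ ((∃ x ∈ S, x d = 0) ∧ (∃ x ∈ S, x d = 1)) := by
  refine ⟨fc, cont_fc.continuousOn, ?_⟩
  intro p S hsub hval hpc d hd
  obtain ⟨⟨a, haS, ha⟩, ⟨b, hbS, hb⟩⟩ := hd
  rcases lt_trichotomy p 0 with hp | hp | hp
  · -- p < 0 : every point of the fiber has coords < 1
    have hfb : fc b < 0 := by rw [hval b hbS]; exact hp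
    obtain ⟨hb0, hb1⟩ := fc_neg (hsub hbS) hfb
    fin_cases d
    · have hb' : b 0 = 1 := hb; linarith
    · have hb' : b 1 = 1 := hb; linarith
  · -- p = 0 : the topologist's sine curve
    subst hp
    fin_cases d
    · have ha' : a 0 = 0 := ha
      have hb' : b 0 = 1 := hb
      exact no_path hsub hval hpc haS hbS ha' (by rw [hb']; norm_num)
    · have ha' : a 1 = 0 := ha
      have hb' : b 1 = 1 := hb
      -- a has y-coord 0, so a is on the curve: a 0 > 0
      have ha0 : 0 < a 0 := by
        rcases fc_zero (hsub haS) (hval a haS) with ⟨_, h12⟩ | ⟨hpos, _⟩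
        · rw [ha'] at h12; linarith
        · exact hpos
      -- b has y-coord 1, so b is on the segment: b 0 = 0
      have hb0 : b 0 = 0 := by
        rcases fc_zero (hsub hbS) (hval b hbS) with ⟨h0, _⟩ | ⟨hpos, hsc⟩
        · exact h0
        · exfalso
          have := sc_ub (b 0)
          rw [hb'] at hsc
          linarith
      exact no_path hsub hval hpc hbS haS hb0 ha0
  · -- p > 0 : every point of the fiber has coords > 0
    have hfa : 0 < fc a := by rw [hval a haS]; exact hp
    obtain ⟨ha0, ha1⟩ := fc_pos (hsub haS) hfa
    fin_cases d
    · have ha' : a 0 = 0 := ha; linarith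
    · have ha' : a 1 = 0 := ha; linarith
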